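/- arXiv:1509.03869 — 2 statements merged into one kernel-verified Lean document; each statement's English description precedes it below -/
import Mathlib

section
/- The algebra O_nc(GL₂) = k⟨a,b,c,d,δ^{±1}⟩/I (with I generated by ac−ca, bd−db, ad−cb−δ, da−bc−δ, δδ^{-1}−1, δ^{-1}δ−1, aδ^{-1}d−bδ^{-1}c−1, dδ^{-1}a−cδ^{-1}b−1, bδ^{-1}a−aδ^{-1}b, cδ^{-1}d−dδ^{-1}c) carries a Hopf algebra structure where Δ(a)=a⊗a+b⊗c, Δ(b)=a⊗b+b⊗d, Δ(c)=c⊗a+d⊗c, Δ(d)=c⊗b+d⊗d, Δ(δ^{±1})=δ^{±1}⊗δ^{±1}, ε(a)=ε(d)=1, ε(b)=ε(c)=0, ε(δ^{±1})=1, and antipode S(a)=δ^{-1}d, S(b)=−δ^{-1}b, S(c)=−δ^{-1}c, S(d)=δ^{-1}a, S(δ^{±1})=δ^{∓1}. In particular S is a well-defined algebra anti-homomorphism and satisfies the antipode axioms on generators. -/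
open TensorProduct

/-- The six generators `a, b, c, d, δ, δ⁻¹` of `O_nc(GL₂)`. -/
inductive GL2Gen : Type
  | a : GL2Gen
  | b : GL2Gen
  | c : GL2Gen
  | d : GL2Gen
  | del : GL2Gen
  | delInv : GL2Gen
  deriving DecidableEq

open GL2Gen

namespace GL2Rel

variable (k : Type) [Field k]

local notation "ι" => FreeAlgebra.ι k (X := GL2Gen)

/-- The defining relations of `O_nc(GL₂)`. -/
inductive rel : FreeAlgebra k GL2Gen → FreeAlgebra k GL2Gen → Prop
  | ac_comm : rel (ι a * ι c) (ι c * ι a)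
  | bd_comm : rel (ι b * ι d) (ι d * ι b)
  | det1 : rel (ι a * ι d - ι c * ι b) (ι del)
  | det2 : rel (ι d * ι a - ι b * ι c) (ι del)
  | delInv1 : rel (ι del * ι delInv) 1
  | delInv2 : rel (ι delInv * ι del) 1
  | anti1 : rel (ι a * ι delInv * ι d - ι b * ι delInv * ι c) 1
  | anti2 : rel (ι d * ι delInv * ι a - ι c * ι delInv * ι b) 1
  | anti3 : rel (ι b * ι delInv * ι a - ι a * ι delInv * ι b) 0
  | anti4 : rel (ι c * ι delInv * ι d - ι d * ι delInv * ι c) 0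

end GL2Rel

/-- The algebra `O_nc(GL₂)`. -/
abbrev OncGL2 (k : Type) [Field k] : Type := RingQuot (GL2Rel.rel k)

/-- The images of the generators in `O_nc(GL₂)`. -/
noncomputable def gg (k : Type) [Field k] (g : GL2Gen) : OncGL2 k :=
  RingQuot.mkAlgHom k (GL2Rel.rel k) (FreeAlgebra.ι k g)

/-!
The maps `Δ`, `ε` and `S` are defined on the free algebra by their values on the generators
(`S` as an algebra map into the opposite algebra) and descend to `O_nc(GL₂)` because they respect
each of the ten defining relations. Coassociativity and the counit laws are equalities of algebra
maps, so they need only be checked on generators. The antipode laws are not, but since `S` is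
anti-multiplicative, the elements satisfying them form a subalgebra, so checking them on the
generators suffices as well.
-/

section Antipode

variable {R A : Type*} [CommSemiring R] [Semiring A] [Algebra R A] {S : A →ₗ[R] A}

theorem mul'_map_antiHom_id_mul_tmul (hS : ∀ x y, S (x * y) = S y * S x)
    (u : A ⊗[R] A) (p q : A) :
    LinearMap.mul' R A (map S LinearMap.id (u * p ⊗ₜ q))
      = S p * LinearMap.mul' R A (map S LinearMap.id u) * q := by
  induction u using TensorProduct.induction_on with
  | zero => simp
  | add u w hu hw => simp only [add_mul, map_add, hu, hw, mul_add]
  | tmul x y => simp [hS, mul_assoc]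

theorem mul'_map_id_antiHom_tmul_mul (hS : ∀ x y, S (x * y) = S y * S x)
    (v : A ⊗[R] A) (p q : A) :
    LinearMap.mul' R A (map LinearMap.id S (p ⊗ₜ q * v))
      = p * LinearMap.mul' R A (map LinearMap.id S v) * S q := by
  induction v using TensorProduct.induction_on with
  | zero => simp
  | add v w hv hw => simp only [mul_add, map_add, hv, hw, add_mul]
  | tmul x y => simp [hS, mul_assoc]

theorem mul'_map_antiHom_id_mul (hS : ∀ x y, S (x * y) = S y * S x)
    {u : A ⊗[R] A} {c : R} (hu : LinearMap.mul' R A (map S LinearMap.id u) = algebraMap R A c)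
    (v : A ⊗[R] A) :
    LinearMap.mul' R A (map S LinearMap.id (u * v))
      = c • LinearMap.mul' R A (map S LinearMap.id v) := by
  induction v using TensorProduct.induction_on with
  | zero => simp
  | add v w hv hw => simp only [mul_add, map_add, hv, hw, smul_add]
  | tmul p q =>
    rw [mul'_map_antiHom_id_mul_tmul hS, hu, ← Algebra.commutes, Algebra.smul_def]
    simp [mul_assoc]

theorem mul'_map_id_antiHom_mul (hS : ∀ x y, S (x * y) = S y * S x)
    {v : A ⊗[R] A} {c : R} (hv : LinearMap.mul' R A (map LinearMap.id S v) = algebraMap R A c)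
    (u : A ⊗[R] A) :
    LinearMap.mul' R A (map LinearMap.id S (u * v))
      = c • LinearMap.mul' R A (map LinearMap.id S u) := by
  induction u using TensorProduct.induction_on with
  | zero => simp
  | add u w hu hw => simp only [add_mul, map_add, hu, hw, smul_add]
  | tmul p q =>
    rw [mul'_map_id_antiHom_tmul_mul hS, hv, ← Algebra.commutes, Algebra.smul_def]
    simp [mul_assoc]

variable {Δ : A →ₐ[R] A ⊗[R] A} {ε : A →ₐ[R] R}

theorem mul'_map_antiHom_id_comul_of_adjoin_eq_top {s : Set A} (hs : Algebra.adjoin R s = ⊤)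
    (hS1 : S 1 = 1) (hS : ∀ x y, S (x * y) = S y * S x)
    (h : ∀ x ∈ s, LinearMap.mul' R A (map S LinearMap.id (Δ x)) = algebraMap R A (ε x))
    (x : A) :
    LinearMap.mul' R A (map S LinearMap.id (Δ x)) = algebraMap R A (ε x) := by
  have hx : x ∈ Algebra.adjoin R s := hs ▸ Algebra.mem_top
  induction hx using Algebra.adjoin_induction with
  | mem x hx => exact h x hx
  | algebraMap r =>
    simp [Algebra.algebraMap_eq_smul_one, Algebra.TensorProduct.one_def, hS1]
  | add x y _ _ hx hy => simp only [map_add, hx, hy]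
  | mul x y _ _ hx hy =>
    rw [map_mul, mul'_map_antiHom_id_mul hS hx, hy, map_mul, map_mul, Algebra.smul_def]

theorem mul'_map_id_antiHom_comul_of_adjoin_eq_top {s : Set A} (hs : Algebra.adjoin R s = ⊤)
    (hS1 : S 1 = 1) (hS : ∀ x y, S (x * y) = S y * S x)
    (h : ∀ x ∈ s, LinearMap.mul' R A (map LinearMap.id S (Δ x)) = algebraMap R A (ε x))
    (x : A) :
    LinearMap.mul' R A (map LinearMap.id S (Δ x)) = algebraMap R A (ε x) := by
  have hx : x ∈ Algebra.adjoin R s := hs ▸ Algebra.mem_top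
  induction hx using Algebra.adjoin_induction with
  | mem x hx => exact h x hx
  | algebraMap r =>
    simp [Algebra.algebraMap_eq_smul_one, Algebra.TensorProduct.one_def, hS1]
  | add x y _ _ hx hy => simp only [map_add, hx, hy]
  | mul x y _ _ hx hy =>
    rw [map_mul, mul'_map_id_antiHom_mul hS hy, hx, Algebra.smul_def, ← map_mul, map_mul ε,
      mul_comm]

end Antipode

noncomputable section

namespace OncGL2

variable (k : Type) [Field k]

@[simp]
theorem a_mul_c : gg k a * gg k c = gg k c * gg k a := by
  simpa [gg] using RingQuot.mkAlgHom_rel k GL2Rel.rel.ac_comm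

@[simp]
theorem b_mul_d : gg k b * gg k d = gg k d * gg k b := by
  simpa [gg] using RingQuot.mkAlgHom_rel k GL2Rel.rel.bd_comm

@[simp]
theorem a_mul_d : gg k a * gg k d = gg k c * gg k b + gg k del := by
  simpa [gg, sub_eq_iff_eq_add'] using RingQuot.mkAlgHom_rel k GL2Rel.rel.det1

@[simp]
theorem d_mul_a : gg k d * gg k a = gg k b * gg k c + gg k del := by
  simpa [gg, sub_eq_iff_eq_add'] using RingQuot.mkAlgHom_rel k GL2Rel.rel.det2

@[simp]
theorem del_mul_delInv : gg k del * gg k delInv = 1 := by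
  simpa [gg] using RingQuot.mkAlgHom_rel k GL2Rel.rel.delInv1

@[simp]
theorem delInv_mul_del : gg k delInv * gg k del = 1 := by
  simpa [gg] using RingQuot.mkAlgHom_rel k GL2Rel.rel.delInv2

@[simp]
theorem a_delInv_d : gg k a * (gg k delInv * gg k d) = gg k b * (gg k delInv * gg k c) + 1 := by
  simpa [gg, mul_assoc, sub_eq_iff_eq_add'] using RingQuot.mkAlgHom_rel k GL2Rel.rel.anti1

@[simp]
theorem d_delInv_a : gg k d * (gg k delInv * gg k a) = gg k c * (gg k delInv * gg k b) + 1 := by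
  simpa [gg, mul_assoc, sub_eq_iff_eq_add'] using RingQuot.mkAlgHom_rel k GL2Rel.rel.anti2

@[simp]
theorem b_delInv_a : gg k b * (gg k delInv * gg k a) = gg k a * (gg k delInv * gg k b) := by
  simpa [gg, mul_assoc, sub_eq_zero] using RingQuot.mkAlgHom_rel k GL2Rel.rel.anti3

@[simp]
theorem c_delInv_d : gg k c * (gg k delInv * gg k d) = gg k d * (gg k delInv * gg k c) := by
  simpa [gg, mul_assoc, sub_eq_zero] using RingQuot.mkAlgHom_rel k GL2Rel.rel.anti4

@[simp]
theorem del_mul_delInv_mul (x : OncGL2 k) : gg k del * (gg k delInv * x) = x := by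
  rw [← mul_assoc, del_mul_delInv, one_mul]

/- The `Neg` instance of `RingQuot` is not reducibly defeq to the one in its `Ring` structure,
so `simp` cannot apply `neg_mul` and `mul_neg` to `OncGL2 k` directly. -/

@[simp]
theorem neg_mul' (x y : OncGL2 k) : -x * y = -(x * y) := neg_mul x y

@[simp]
theorem mul_neg' (x y : OncGL2 k) : x * -y = -(x * y) := mul_neg x y

theorem adjoin_range_gg : Algebra.adjoin k (Set.range (gg k)) = ⊤ := by
  rw [show Set.range (gg k) = RingQuot.mkAlgHom k (GL2Rel.rel k) '' Set.range (FreeAlgebra.ι k)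
    from Set.range_comp _ _, ← AlgHom.map_adjoin, FreeAlgebra.adjoin_range_ι,
    Algebra.map_top, AlgHom.range_eq_top]
  exact RingQuot.mkAlgHom_surjective k _

variable {k} in
theorem algHom_ext {B : Type*} [Semiring B] [Algebra k B] {f g : OncGL2 k →ₐ[k] B}
    (h : ∀ i, f (gg k i) = g (gg k i)) : f = g :=
  RingQuot.ringQuot_ext' _ _ _ (FreeAlgebra.hom_ext (funext h))

theorem liftAlgHom_gg {B : Type*} [Semiring B] [Algebra k B] (f : GL2Gen → B)
    (hf : ∀ ⦃x y⦄, GL2Rel.rel k x y → FreeAlgebra.lift k f x = FreeAlgebra.lift k f y)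
    (i : GL2Gen) : RingQuot.liftAlgHom k ⟨FreeAlgebra.lift k f, hf⟩ (gg k i) = f i := by
  simp [gg]

def comulGen : GL2Gen → OncGL2 k ⊗[k] OncGL2 k
  | .a => gg k a ⊗ₜ gg k a + gg k b ⊗ₜ gg k c
  | .b => gg k a ⊗ₜ gg k b + gg k b ⊗ₜ gg k d
  | .c => gg k c ⊗ₜ gg k a + gg k d ⊗ₜ gg k c
  | .d => gg k c ⊗ₜ gg k b + gg k d ⊗ₜ gg k d
  | .del => gg k del ⊗ₜ gg k del
  | .delInv => gg k delInv ⊗ₜ gg k delInv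

theorem lift_comulGen_rel ⦃x y : FreeAlgebra k GL2Gen⦄ (h : GL2Rel.rel k x y) :
    FreeAlgebra.lift k (comulGen k) x = FreeAlgebra.lift k (comulGen k) y := by
  induction h <;>
    simp only [map_mul, map_sub, map_one, map_zero, FreeAlgebra.lift_ι_apply, comulGen, mul_add,
      add_mul, Algebra.TensorProduct.tmul_mul_tmul, mul_assoc, a_mul_c, b_mul_d, a_mul_d, d_mul_a,
      del_mul_delInv, delInv_mul_del, a_delInv_d, d_delInv_a, b_delInv_a, c_delInv_d, add_tmul,
      tmul_add, Algebra.TensorProduct.one_def] <;>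
    abel

def comul : OncGL2 k →ₐ[k] OncGL2 k ⊗[k] OncGL2 k :=
  RingQuot.liftAlgHom k ⟨FreeAlgebra.lift k (comulGen k), lift_comulGen_rel k⟩

def counitGen : GL2Gen → k
  | .b | .c => 0
  | _ => 1

theorem lift_counitGen_rel ⦃x y : FreeAlgebra k GL2Gen⦄ (h : GL2Rel.rel k x y) :
    FreeAlgebra.lift k (counitGen k) x = FreeAlgebra.lift k (counitGen k) y := by
  induction h <;> simp [counitGen]

def counit : OncGL2 k →ₐ[k] k :=
  RingQuot.liftAlgHom k ⟨FreeAlgebra.lift k (counitGen k), lift_counitGen_rel k⟩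

def antipodeGen : GL2Gen → (OncGL2 k)ᵐᵒᵖ
  | .a => .op (gg k delInv * gg k d)
  | .b => .op (-(gg k delInv * gg k b))
  | .c => .op (-(gg k delInv * gg k c))
  | .d => .op (gg k delInv * gg k a)
  | .del => .op (gg k delInv)
  | .delInv => .op (gg k del)

theorem lift_antipodeGen_rel ⦃x y : FreeAlgebra k GL2Gen⦄ (h : GL2Rel.rel k x y) :
    FreeAlgebra.lift k (antipodeGen k) x = FreeAlgebra.lift k (antipodeGen k) y := by
  apply MulOpposite.unop_injective
  induction h <;>
    simp [antipodeGen, mul_assoc, mul_add, add_sub_cancel_left]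

def antipodeOp : OncGL2 k →ₐ[k] (OncGL2 k)ᵐᵒᵖ :=
  RingQuot.liftAlgHom k ⟨FreeAlgebra.lift k (antipodeGen k), lift_antipodeGen_rel k⟩

def antipode : OncGL2 k →ₗ[k] OncGL2 k :=
  (MulOpposite.opLinearEquiv k).symm.toLinearMap ∘ₗ (antipodeOp k).toLinearMap

theorem comul_gg (i : GL2Gen) : comul k (gg k i) = comulGen k i := liftAlgHom_gg k _ _ i

theorem counit_gg (i : GL2Gen) : counit k (gg k i) = counitGen k i := liftAlgHom_gg k _ _ i

theorem antipode_gg (i : GL2Gen) : antipode k (gg k i) = (antipodeGen k i).unop := by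
  simp [antipode, antipodeOp, liftAlgHom_gg]

theorem antipode_one : antipode k 1 = 1 := by
  simp [antipode]

theorem antipode_mul (x y : OncGL2 k) : antipode k (x * y) = antipode k y * antipode k x := by
  simp [antipode]

theorem comul_coassoc :
    (Algebra.TensorProduct.assoc k k k (OncGL2 k) (OncGL2 k) (OncGL2 k)).toAlgHom.comp
        ((Algebra.TensorProduct.map (comul k) (.id k _)).comp (comul k))
      = (Algebra.TensorProduct.map (.id k _) (comul k)).comp (comul k) :=
  algHom_ext fun i => by
    cases i <;> simp [comul_gg, comulGen, add_tmul, tmul_add] <;> abel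

theorem lid_comp_counit_comul :
    (Algebra.TensorProduct.lid k (OncGL2 k)).toAlgHom.comp
        ((Algebra.TensorProduct.map (counit k) (.id k _)).comp (comul k)) = .id k _ :=
  algHom_ext fun i => by cases i <;> simp [comul_gg, comulGen, counit_gg, counitGen]

theorem rid_comp_comul_counit :
    (Algebra.TensorProduct.rid k k (OncGL2 k)).toAlgHom.comp
        ((Algebra.TensorProduct.map (.id k _) (counit k)).comp (comul k)) = .id k _ :=
  algHom_ext fun i => by cases i <;> simp [comul_gg, comulGen, counit_gg, counitGen]

theorem mul'_map_antipode_id_comul (x : OncGL2 k) :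
    LinearMap.mul' k (OncGL2 k) (map (antipode k) LinearMap.id (comul k x))
      = algebraMap k (OncGL2 k) (counit k x) := by
  refine mul'_map_antiHom_id_comul_of_adjoin_eq_top (adjoin_range_gg k) (antipode_one k)
    (antipode_mul k) ?_ x
  rintro _ ⟨i, rfl⟩
  cases i <;>
    simp [comul_gg, comulGen, counit_gg, counitGen, antipode_gg, antipodeGen, mul_assoc, mul_add]

theorem mul'_map_id_antipode_comul (x : OncGL2 k) :
    LinearMap.mul' k (OncGL2 k) (map LinearMap.id (antipode k) (comul k x))
      = algebraMap k (OncGL2 k) (counit k x) := by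
  refine mul'_map_id_antiHom_comul_of_adjoin_eq_top (adjoin_range_gg k) (antipode_one k)
    (antipode_mul k) ?_ x
  rintro _ ⟨i, rfl⟩
  cases i <;> simp [comul_gg, comulGen, counit_gg, counitGen, antipode_gg, antipodeGen]

end OncGL2

end

/-- `O_nc(GL₂)` carries a Hopf algebra structure: there exist an
algebra morphism `Δ : H → H ⊗ H` (the comultiplication), an algebra morphism
`ε : H → k` (the counit) and a linear map `S : H → H` (the antipode) which is a
unital algebra anti-homomorphism, satisfying coassociativity, the counit axioms
and the antipode axioms, with the prescribed values on the generators: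
`Δ(M) = M ⊗ M`, `Δ(δ^{±1}) = δ^{±1} ⊗ δ^{±1}`, `ε(M) = Id`, `ε(δ^{±1}) = 1`,
`S(a) = δ⁻¹d`, `S(b) = −δ⁻¹b`, `S(c) = −δ⁻¹c`, `S(d) = δ⁻¹a`, `S(δ^{±1}) = δ^{∓1}`. -/
theorem OncGL2_hopfAlgebra (k : Type) [Field k] :
    ∃ (Δ : OncGL2 k →ₐ[k] OncGL2 k ⊗[k] OncGL2 k) (ε : OncGL2 k →ₐ[k] k)
      (S : OncGL2 k →ₗ[k] OncGL2 k),
      -- coassociativity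
      (∀ x, (TensorProduct.assoc k (OncGL2 k) (OncGL2 k) (OncGL2 k))
          (TensorProduct.map Δ.toLinearMap LinearMap.id (Δ x))
        = TensorProduct.map LinearMap.id Δ.toLinearMap (Δ x)) ∧
      -- counit axioms
      (∀ x, (TensorProduct.lid k (OncGL2 k))
          (TensorProduct.map ε.toLinearMap LinearMap.id (Δ x)) = x) ∧
      (∀ x, (TensorProduct.rid k (OncGL2 k))
          (TensorProduct.map LinearMap.id ε.toLinearMap (Δ x)) = x) ∧
      -- `S` is a unital algebra anti-homomorphism
      S 1 = 1 ∧ (∀ x y, S (x * y) = S y * S x) ∧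
      -- antipode axioms
      (∀ x, LinearMap.mul' k (OncGL2 k)
          (TensorProduct.map S LinearMap.id (Δ x)) = algebraMap k (OncGL2 k) (ε x)) ∧
      (∀ x, LinearMap.mul' k (OncGL2 k)
          (TensorProduct.map LinearMap.id S (Δ x)) = algebraMap k (OncGL2 k) (ε x)) ∧
      -- values of `Δ` on the generators: `Δ(M) = M ⊗ M`, `Δ(δ^{±1}) = δ^{±1} ⊗ δ^{±1}`
      Δ (gg k a) = gg k a ⊗ₜ gg k a + gg k b ⊗ₜ gg k c ∧
      Δ (gg k b) = gg k a ⊗ₜ gg k b + gg k b ⊗ₜ gg k d ∧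
      Δ (gg k c) = gg k c ⊗ₜ gg k a + gg k d ⊗ₜ gg k c ∧
      Δ (gg k d) = gg k c ⊗ₜ gg k b + gg k d ⊗ₜ gg k d ∧
      Δ (gg k del) = gg k del ⊗ₜ gg k del ∧
      Δ (gg k delInv) = gg k delInv ⊗ₜ gg k delInv ∧
      -- values of `ε` on the generators
      ε (gg k a) = 1 ∧ ε (gg k b) = 0 ∧ ε (gg k c) = 0 ∧ ε (gg k d) = 1 ∧
      ε (gg k del) = 1 ∧ ε (gg k delInv) = 1 ∧
      -- values of `S` on the generators
      S (gg k a) = gg k delInv * gg k d ∧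
      S (gg k b) = -(gg k delInv * gg k b) ∧
      S (gg k c) = -(gg k delInv * gg k c) ∧
      S (gg k d) = gg k delInv * gg k a ∧
      S (gg k del) = gg k delInv ∧
      S (gg k delInv) = gg k del := by
  refine ⟨OncGL2.comul k, OncGL2.counit k, OncGL2.antipode k,
    DFunLike.congr_fun (OncGL2.comul_coassoc k),
    DFunLike.congr_fun (OncGL2.lid_comp_counit_comul k),
    DFunLike.congr_fun (OncGL2.rid_comp_comul_counit k),
    OncGL2.antipode_one k, OncGL2.antipode_mul k,
    OncGL2.mul'_map_antipode_id_comul k, OncGL2.mul'_map_id_antipode_comul k, ?_⟩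
  simp [OncGL2.comul_gg, OncGL2.comulGen, OncGL2.counit_gg, OncGL2.counitGen, OncGL2.antipode_gg,
    OncGL2.antipodeGen]
end

section
/- Let V be the 2-dimensional left comodule over H = O_nc(GL₂) with basis e₁, e₂ and coaction e₁ ↦ a⊗e₁ + b⊗e₂, e₂ ↦ c⊗e₁ + d⊗e₂, and let R^{-1} be the one-dimensional comodule k·r^{-1} with coaction r^{-1} ↦ δ^{-1} ⊗ r^{-1}. Then V has a right dual V* ≅ V ⊗ R^{-1} in the monoidal category of H-comodules, with evaluation V⊗R^{-1}⊗V → k sending e₁r^{-1}e₂ ↦ −1, e₂r^{-1}e₁ ↦ 1, e₁r^{-1}e₁ ↦ 0, e₂r^{-1}e₂ ↦ 0, and coevaluation k → V⊗V⊗R^{-1} sending 1 ↦ (e₁e₂ − e₂e₁)r^{-1}; i.e. both zig-zag composites are the identity and both structure maps are comodule morphisms. -/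
open TensorProduct

open GL2Gen

namespace GL2Rel

variable (k : Type) [Field k]

local notation "ι" => FreeAlgebra.ι k (X := GL2Gen)

end GL2Rel

variable (k : Type) [Field k]

/-- A two-dimensional vector space with basis `e₀, e₁` (Pi.single). -/
abbrev V2 (k : Type) [Field k] : Type := Fin 2 → k

/-- The coaction on a 2-dimensional comodule determined by the matrix `m`:
`eᵢ ↦ ∑ⱼ m i j ⊗ eⱼ`. -/
noncomputable def rhoOf (m : Fin 2 → Fin 2 → OncGL2 k) :
    V2 k →ₗ[k] OncGL2 k ⊗[k] V2 k :=
  ∑ i : Fin 2, ∑ j : Fin 2,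
    (TensorProduct.mk k (OncGL2 k) (V2 k) (m i j)).comp
      ((LinearMap.proj i : V2 k →ₗ[k] k).smulRight (Pi.single j 1))

/-- The coaction of the standard comodule `V`: `e₁ ↦ a⊗e₁ + b⊗e₂`, `e₂ ↦ c⊗e₁ + d⊗e₂`. -/
noncomputable def rhoV : V2 k →ₗ[k] OncGL2 k ⊗[k] V2 k :=
  rhoOf k (fun i j => gg k (match i, j with
    | 0, 0 => GL2Gen.a | 0, 1 => GL2Gen.b | 1, 0 => GL2Gen.c | 1, 1 => GL2Gen.d))

/-- The coaction of `W = V ⊗ R⁻¹` with basis `fᵢ = eᵢ ⊗ r⁻¹`: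
`f₁ ↦ aδ⁻¹⊗f₁ + bδ⁻¹⊗f₂`, `f₂ ↦ cδ⁻¹⊗f₁ + dδ⁻¹⊗f₂`. -/
noncomputable def rhoW : V2 k →ₗ[k] OncGL2 k ⊗[k] V2 k :=
  rhoOf k (fun i j => (gg k (match i, j with
    | 0, 0 => GL2Gen.a | 0, 1 => GL2Gen.b | 1, 0 => GL2Gen.c | 1, 1 => GL2Gen.d))
      * gg k GL2Gen.delInv)

/-- The tensor-product coaction on `X ⊗ Y`: `x⊗y ↦ x₍₋₁₎y₍₋₁₎ ⊗ (x₍₀₎ ⊗ y₍₀₎)`. -/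
noncomputable def rhoTensor (X Y : Type) [AddCommGroup X] [Module k X]
    [AddCommGroup Y] [Module k Y]
    (ρX : X →ₗ[k] OncGL2 k ⊗[k] X) (ρY : Y →ₗ[k] OncGL2 k ⊗[k] Y) :
    X ⊗[k] Y →ₗ[k] OncGL2 k ⊗[k] (X ⊗[k] Y) :=
  (TensorProduct.map (LinearMap.mul' k (OncGL2 k)) LinearMap.id).comp
    ((TensorProduct.tensorTensorTensorComm k (OncGL2 k) X (OncGL2 k) Y).toLinearMap.comp
      (TensorProduct.map ρX ρY))

/-- The evaluation `W ⊗ V → k`: `f₁⊗e₂ ↦ −1`, `f₂⊗e₁ ↦ 1`, `f₁⊗e₁, f₂⊗e₂ ↦ 0`. -/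
noncomputable def evWV : V2 k ⊗[k] V2 k →ₗ[k] k :=
  TensorProduct.lift (LinearMap.mk₂ k (fun w v : V2 k => w 1 * v 0 - w 0 * v 1)
    (fun w w' v => by simp [Pi.add_apply]; ring)
    (fun s w v => by simp [Pi.smul_apply, smul_eq_mul]; ring)
    (fun w v v' => by simp [Pi.add_apply]; ring)
    (fun s w v => by simp [Pi.smul_apply, smul_eq_mul]; ring))

/-- The coevaluation `k → V ⊗ W`: `1 ↦ e₁⊗f₂ − e₂⊗f₁` (i.e. `(e₁e₂ − e₂e₁)r⁻¹`). -/
noncomputable def coevVW : k →ₗ[k] V2 k ⊗[k] V2 k :=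
  LinearMap.toSpanSingleton k _
    ((Pi.single 0 1 : V2 k) ⊗ₜ[k] (Pi.single 1 1 : V2 k)
      - (Pi.single 1 1 : V2 k) ⊗ₜ[k] (Pi.single 0 1 : V2 k))

/-!
On the basis `eᵢ ⊗ eⱼ`, the tensor coaction of two comodules given by matrices `m`, `n` has
coefficients `m i p * n j q`. Hence `ev` and `coev` are comodule maps as soon as four quadratic
identities between the entries hold. For `ev` (with `m` the matrix of `W`, `n` that of `V`) they
are literally the four antipode relations of `O_nc(GL₂)`; for `coev` they are `ac = ca`, `bd = db`
and the two determinant relations `ad - cb = δ = da - bc`, multiplied on the right by `δ⁻¹`.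
The zig-zag identities only involve the vector spaces and are checked on the basis.
-/

theorem gg_a_mul_c_comm : gg k a * gg k c = gg k c * gg k a := by
  simpa [gg] using RingQuot.mkAlgHom_rel k GL2Rel.rel.ac_comm

theorem gg_b_mul_d_comm : gg k b * gg k d = gg k d * gg k b := by
  simpa [gg] using RingQuot.mkAlgHom_rel k GL2Rel.rel.bd_comm

theorem gg_ad_sub_cb : gg k a * gg k d - gg k c * gg k b = gg k del := by
  simpa [gg] using RingQuot.mkAlgHom_rel k GL2Rel.rel.det1

theorem gg_da_sub_bc : gg k d * gg k a - gg k b * gg k c = gg k del := by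
  simpa [gg] using RingQuot.mkAlgHom_rel k GL2Rel.rel.det2

theorem gg_del_mul_delInv : gg k del * gg k delInv = 1 := by
  simpa [gg] using RingQuot.mkAlgHom_rel k GL2Rel.rel.delInv1

theorem gg_a_delInv_d_sub_b_delInv_c :
    gg k a * gg k delInv * gg k d - gg k b * gg k delInv * gg k c = 1 := by
  simpa [gg] using RingQuot.mkAlgHom_rel k GL2Rel.rel.anti1

theorem gg_d_delInv_a_sub_c_delInv_b :
    gg k d * gg k delInv * gg k a - gg k c * gg k delInv * gg k b = 1 := by
  simpa [gg] using RingQuot.mkAlgHom_rel k GL2Rel.rel.anti2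

theorem gg_b_delInv_a_sub_a_delInv_b :
    gg k b * gg k delInv * gg k a - gg k a * gg k delInv * gg k b = 0 := by
  simpa [gg] using RingQuot.mkAlgHom_rel k GL2Rel.rel.anti3

theorem gg_c_delInv_d_sub_d_delInv_c :
    gg k c * gg k delInv * gg k d - gg k d * gg k delInv * gg k c = 0 := by
  simpa [gg] using RingQuot.mkAlgHom_rel k GL2Rel.rel.anti4

theorem rhoOf_single (m : Fin 2 → Fin 2 → OncGL2 k) (i : Fin 2) :
    rhoOf k m (Pi.single i 1) = ∑ j, m i j ⊗ₜ[k] (Pi.single j 1 : V2 k) := by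
  fin_cases i <;> simp [rhoOf]

theorem rhoTensor_rhoOf_single (m n : Fin 2 → Fin 2 → OncGL2 k) (i j : Fin 2) :
    rhoTensor k (V2 k) (V2 k) (rhoOf k m) (rhoOf k n)
        ((Pi.single i 1 : V2 k) ⊗ₜ[k] (Pi.single j 1 : V2 k)) =
      ∑ p, ∑ q, (m i p * n j q) ⊗ₜ[k] ((Pi.single p 1 : V2 k) ⊗ₜ[k] (Pi.single q 1 : V2 k)) := by
  simp only [rhoTensor, LinearMap.comp_apply, map_tmul, rhoOf_single, sum_tmul, tmul_sum, map_sum,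
    LinearEquiv.coe_coe, tensorTensorTensorComm_tmul, LinearMap.mul'_apply, LinearMap.id_apply]
  exact Finset.sum_comm

theorem evWV_tmul (w v : V2 k) : evWV k (w ⊗ₜ[k] v) = w 1 * v 0 - w 0 * v 1 := rfl

theorem map_evWV_comp_rhoTensor_rhoOf {m n : Fin 2 → Fin 2 → OncGL2 k}
    (h00 : m 0 1 * n 0 0 - m 0 0 * n 0 1 = 0) (h01 : m 0 0 * n 1 1 - m 0 1 * n 1 0 = 1)
    (h10 : m 1 1 * n 0 0 - m 1 0 * n 0 1 = 1) (h11 : m 1 0 * n 1 1 - m 1 1 * n 1 0 = 0) :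
    (TensorProduct.map LinearMap.id (evWV k)).comp
        (rhoTensor k (V2 k) (V2 k) (rhoOf k m) (rhoOf k n))
      = (TensorProduct.mk k (OncGL2 k) k 1).comp (evWV k) := by
  ext i j
  apply (TensorProduct.rid k (OncGL2 k)).injective
  fin_cases i <;> fin_cases j <;>
    simp [rhoTensor_rhoOf_single, evWV_tmul, sub_eq_zero.mp h00, eq_add_of_sub_eq h01,
      eq_add_of_sub_eq h10, sub_eq_zero.mp h11]

theorem rhoTensor_rhoOf_comp_coevVW {m n : Fin 2 → Fin 2 → OncGL2 k}
    (h00 : m 0 0 * n 1 0 - m 1 0 * n 0 0 = 0) (h01 : m 0 0 * n 1 1 - m 1 0 * n 0 1 = 1)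
    (h10 : m 1 1 * n 0 0 - m 0 1 * n 1 0 = 1) (h11 : m 0 1 * n 1 1 - m 1 1 * n 0 1 = 0) :
    (rhoTensor k (V2 k) (V2 k) (rhoOf k m) (rhoOf k n)).comp (coevVW k)
      = (TensorProduct.map LinearMap.id (coevVW k)).comp
          (TensorProduct.mk k (OncGL2 k) k 1) := by
  ext
  simp only [LinearMap.comp_apply, coevVW, LinearMap.toSpanSingleton_apply, one_smul, map_sub,
    rhoTensor_rhoOf_single, Fin.sum_univ_two, sub_eq_zero.mp h00, eq_add_of_sub_eq h01,
    eq_add_of_sub_eq h10, sub_eq_zero.mp h11, add_tmul, map_tmul, LinearMap.id_apply, mk_apply,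
    tmul_sub]
  abel

theorem map_evWV_comp_rhoTensor_rhoW_rhoV :
    (TensorProduct.map LinearMap.id (evWV k)).comp
        (rhoTensor k (V2 k) (V2 k) (rhoW k) (rhoV k))
      = (TensorProduct.mk k (OncGL2 k) k 1).comp (evWV k) :=
  map_evWV_comp_rhoTensor_rhoOf k (gg_b_delInv_a_sub_a_delInv_b k)
    (gg_a_delInv_d_sub_b_delInv_c k) (gg_d_delInv_a_sub_c_delInv_b k)
    (gg_c_delInv_d_sub_d_delInv_c k)

theorem rhoTensor_rhoV_rhoW_comp_coevVW :
    (rhoTensor k (V2 k) (V2 k) (rhoV k) (rhoW k)).comp (coevVW k)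
      = (TensorProduct.map LinearMap.id (coevVW k)).comp
          (TensorProduct.mk k (OncGL2 k) k 1) := by
  apply rhoTensor_rhoOf_comp_coevVW k <;> simp only [← mul_assoc, ← sub_mul]
  · rw [gg_a_mul_c_comm, sub_self, zero_mul]
  · rw [gg_ad_sub_cb, gg_del_mul_delInv]
  · rw [gg_da_sub_bc, gg_del_mul_delInv]
  · rw [gg_b_mul_d_comm, sub_self, zero_mul]

theorem evWV_coevVW_zigzag_V :
    (TensorProduct.rid k (V2 k)).toLinearMap.comp
      ((TensorProduct.map LinearMap.id (evWV k)).comp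
        ((TensorProduct.assoc k (V2 k) (V2 k) (V2 k)).toLinearMap.comp
          ((TensorProduct.map (coevVW k) LinearMap.id).comp
            (TensorProduct.lid k (V2 k)).symm.toLinearMap)))
      = LinearMap.id := by
  ext i j
  fin_cases i <;> fin_cases j <;> simp [coevVW, evWV_tmul, sub_tmul]

theorem evWV_coevVW_zigzag_W :
    (TensorProduct.lid k (V2 k)).toLinearMap.comp
      ((TensorProduct.map (evWV k) LinearMap.id).comp
        ((TensorProduct.assoc k (V2 k) (V2 k) (V2 k)).symm.toLinearMap.comp
          ((TensorProduct.map LinearMap.id (coevVW k)).comp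
            (TensorProduct.rid k (V2 k)).symm.toLinearMap)))
      = LinearMap.id := by
  ext i j
  fin_cases i <;> fin_cases j <;> simp [coevVW, evWV_tmul, tmul_sub]

/-- `W = V ⊗ R⁻¹` is a right dual of the standard comodule `V`
of `O_nc(GL₂)`: the indicated evaluation and coevaluation are comodule morphisms
and satisfy the two triangle (zig-zag) identities. -/
theorem V_has_right_dual (k : Type) [Field k] :
    -- `ev` is a morphism of comodules
    ((TensorProduct.map LinearMap.id (evWV k)).comp
        (rhoTensor k (V2 k) (V2 k) (rhoW k) (rhoV k))
      = (TensorProduct.mk k (OncGL2 k) k 1).comp (evWV k)) ∧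
    -- `coev` is a morphism of comodules
    ((rhoTensor k (V2 k) (V2 k) (rhoV k) (rhoW k)).comp (coevVW k)
      = (TensorProduct.map LinearMap.id (coevVW k)).comp
          (TensorProduct.mk k (OncGL2 k) k 1)) ∧
    -- first triangle identity on `V`
    ((TensorProduct.rid k (V2 k)).toLinearMap.comp
      ((TensorProduct.map LinearMap.id (evWV k)).comp
        ((TensorProduct.assoc k (V2 k) (V2 k) (V2 k)).toLinearMap.comp
          ((TensorProduct.map (coevVW k) LinearMap.id).comp
            (TensorProduct.lid k (V2 k)).symm.toLinearMap)))
      = LinearMap.id) ∧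
    -- second triangle identity on `W`
    ((TensorProduct.lid k (V2 k)).toLinearMap.comp
      ((TensorProduct.map (evWV k) LinearMap.id).comp
        ((TensorProduct.assoc k (V2 k) (V2 k) (V2 k)).symm.toLinearMap.comp
          ((TensorProduct.map LinearMap.id (coevVW k)).comp
            (TensorProduct.rid k (V2 k)).symm.toLinearMap)))
      = LinearMap.id) :=
  ⟨map_evWV_comp_rhoTensor_rhoW_rhoV k, rhoTensor_rhoV_rhoW_comp_coevVW k,
    evWV_coevVW_zigzag_V k, evWV_coevVW_zigzag_W k⟩
end
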